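/- Let B₁, B₂, B₃ be orthogonal projection operators on a Hilbert space H with B₁ + B₂ + B₃ = I (so their ranges are mutually orthogonal). Let u, v ∈ H be unit vectors with ‖B₁ u‖² = λ, ‖B₂ v‖² = λ', and B₂ u, B₁ v, B₃ u, B₃ v as determined by the decomposition. If additionally ‖B₂ u‖² ≤ 1 − λ and ‖B₁ v‖² ≤ 1 − λ', then |⟨u, v⟩| ≤ √λ·√(1−λ') + √(1−λ)·√λ' + √(1−λ)·√(1−λ'). -/

import Mathlib

open scoped InnerProductSpace

namespace LinearMap

variable {𝕜 E : Type*} [RCLike 𝕜] [NormedAddCommGroup E] [InnerProductSpace 𝕜 E]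

theorem IsSymmetricProjection.inner_map_map {P : E →ₗ[𝕜] E} (hP : P.IsSymmetricProjection)
    (x y : E) : ⟪P x, P y⟫_𝕜 = ⟪x, P y⟫_𝕜 := by
  rw [hP.isSymmetric, ← Module.End.mul_apply, hP.isIdempotentElem.eq]

section ThreeProjections

variable {P₁ P₂ P₃ : E →ₗ[𝕜] E} (h₁ : P₁.IsSymmetricProjection)
  (h₂ : P₂.IsSymmetricProjection) (h₃ : P₃.IsSymmetricProjection) (hsum : P₁ + P₂ + P₃ = id)
include h₁ h₂ h₃ hsum

theorem inner_eq_add_inner_map_map_of_add_add_eq_id (x y : E) :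
    ⟪x, y⟫_𝕜 = ⟪P₁ x, P₁ y⟫_𝕜 + ⟪P₂ x, P₂ y⟫_𝕜 + ⟪P₃ x, P₃ y⟫_𝕜 := by
  rw [h₁.inner_map_map, h₂.inner_map_map, h₃.inner_map_map, ← inner_add_right,
    ← inner_add_right, ← add_apply, ← add_apply, hsum, id_apply]

theorem norm_sq_eq_add_norm_sq_map_of_add_add_eq_id (x : E) :
    ‖x‖ ^ 2 = ‖P₁ x‖ ^ 2 + ‖P₂ x‖ ^ 2 + ‖P₃ x‖ ^ 2 := by
  have h := congrArg RCLike.re (inner_eq_add_inner_map_map_of_add_add_eq_id h₁ h₂ h₃ hsum x x)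
  simpa only [map_add, inner_self_eq_norm_sq] using h

theorem norm_inner_le_add_norm_mul_norm_of_add_add_eq_id (x y : E) :
    ‖⟪x, y⟫_𝕜‖ ≤ ‖P₁ x‖ * ‖P₁ y‖ + ‖P₂ x‖ * ‖P₂ y‖ + ‖P₃ x‖ * ‖P₃ y‖ := by
  rw [inner_eq_add_inner_map_map_of_add_add_eq_id h₁ h₂ h₃ hsum]
  calc _ ≤ ‖⟪P₁ x, P₁ y⟫_𝕜‖ + ‖⟪P₂ x, P₂ y⟫_𝕜‖ + ‖⟪P₃ x, P₃ y⟫_𝕜‖ := norm_add₃_le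
    _ ≤ _ := by gcongr <;> exact norm_inner_le_norm _ _

end ThreeProjections

end LinearMap

/-- Coherence bound between two unit vectors split across three mutually orthogonal
projections (abstract form of the modulated DPSS coherence bound). -/
theorem coherence_three_projections {H : Type*} [NormedAddCommGroup H]
    [InnerProductSpace ℂ H]
    (B₁ B₂ B₃ : H →ₗ[ℂ] H)
    (h₁sa : ∀ w w' : H, ⟪B₁ w, w'⟫_ℂ = ⟪w, B₁ w'⟫_ℂ)
    (h₂sa : ∀ w w' : H, ⟪B₂ w, w'⟫_ℂ = ⟪w, B₂ w'⟫_ℂ)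
    (h₃sa : ∀ w w' : H, ⟪B₃ w, w'⟫_ℂ = ⟪w, B₃ w'⟫_ℂ)
    (h₁idem : B₁ ∘ₗ B₁ = B₁) (h₂idem : B₂ ∘ₗ B₂ = B₂) (h₃idem : B₃ ∘ₗ B₃ = B₃)
    (hsum : B₁ + B₂ + B₃ = LinearMap.id)
    (u v : H) (hu : ‖u‖ = 1) (hv : ‖v‖ = 1)
    (lam lam' : ℝ)
    (hB1u : ‖B₁ u‖ ^ 2 = lam) (hB2v : ‖B₂ v‖ ^ 2 = lam')
    (hB2u : ‖B₂ u‖ ^ 2 ≤ 1 - lam) (hB1v : ‖B₁ v‖ ^ 2 ≤ 1 - lam') :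
    ‖⟪u, v⟫_ℂ‖ ≤ Real.sqrt lam * Real.sqrt (1 - lam')
      + Real.sqrt (1 - lam) * Real.sqrt lam'
      + Real.sqrt (1 - lam) * Real.sqrt (1 - lam') := by
  have hP₁ : B₁.IsSymmetricProjection := ⟨h₁idem, h₁sa⟩
  have hP₂ : B₂.IsSymmetricProjection := ⟨h₂idem, h₂sa⟩
  have hP₃ : B₃.IsSymmetricProjection := ⟨h₃idem, h₃sa⟩
  have hpu := LinearMap.norm_sq_eq_add_norm_sq_map_of_add_add_eq_id hP₁ hP₂ hP₃ hsum u
  have hpv := LinearMap.norm_sq_eq_add_norm_sq_map_of_add_add_eq_id hP₁ hP₂ hP₃ hsum v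
  rw [hu, one_pow] at hpu
  rw [hv, one_pow] at hpv
  have hB3u : ‖B₃ u‖ ^ 2 ≤ 1 - lam := by linarith [sq_nonneg ‖B₂ u‖]
  have hB3v : ‖B₃ v‖ ^ 2 ≤ 1 - lam' := by linarith [sq_nonneg ‖B₁ v‖]
  calc ‖⟪u, v⟫_ℂ‖ ≤ ‖B₁ u‖ * ‖B₁ v‖ + ‖B₂ u‖ * ‖B₂ v‖ + ‖B₃ u‖ * ‖B₃ v‖ :=
        LinearMap.norm_inner_le_add_norm_mul_norm_of_add_add_eq_id hP₁ hP₂ hP₃ hsum u v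
    _ ≤ _ := by
        rw [← Real.sqrt_sq (norm_nonneg (B₁ u)), ← Real.sqrt_sq (norm_nonneg (B₂ v)), hB1u, hB2v]
        gcongr <;> exact Real.le_sqrt_of_sq_le ‹_›
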